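/- Let G=(V,E) be a finite connected simple graph, let H=(V,E_H) with E_H ⊆ E be a connected spanning subgraph of G, and let a, b, c, d ∈ V. Writing spanning-tree and spanning-forest counts in H with superscript H and those in G without, the following inequality of rational numbers holds: ([a|b]^H/[·]^H − [a|b]/[·]) · ([c|d]^H/[·]^H − [c|d]/[·]) ≥ ( ([ad|bc]^H − [ac|bd]^H)/[·]^H − ([ad|bc] − [ac|bd])/[·] )². -/

import Mathlib

open Finset Matrix

open scoped Classical

noncomputable section

/-- The number of connected components of the spanning subgraph `(V, S)` determined by
a set `S` of edges. -/
def kappa (V : Type*) (S : Finset (Sym2 V)) : ℕ :=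
  Nat.card (SimpleGraph.fromEdgeSet (↑S : Set (Sym2 V))).ConnectedComponent

/-- Vertices `a` and `b` lie in the same connected component of the spanning subgraph
`(V, S)`. -/
def EConn {V : Type*} (S : Finset (Sym2 V)) (a b : V) : Prop :=
  (SimpleGraph.fromEdgeSet (↑S : Set (Sym2 V))).Reachable a b

/-- The random-cluster weight `p^|S| (1-p)^(m-|S|) q^{κ(S)}` of an edge subset `S`. -/
def rcWeight {V : Type*} [Fintype V] (G : SimpleGraph V) (p q : ℝ)
    (S : Finset (Sym2 V)) : ℝ :=
  p ^ S.card * (1 - p) ^ (G.edgeFinset.card - S.card) * q ^ kappa V S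

/-- The random-cluster probability of the event `X`, conditioned on all edges of `R`
being present. -/
def rcCondProb {V : Type*} [Fintype V] (G : SimpleGraph V) (p q : ℝ)
    (R : Finset (Sym2 V)) (X : Finset (Sym2 V) → Prop) : ℝ :=
  (∑ S ∈ G.edgeFinset.powerset, if R ⊆ S ∧ X S then rcWeight G p q S else 0) /
    (∑ S ∈ G.edgeFinset.powerset, if R ⊆ S then rcWeight G p q S else 0)

/-- The random-cluster probability of the event `X`. -/
def rcProb {V : Type*} [Fintype V] (G : SimpleGraph V) (p q : ℝ)
    (X : Finset (Sym2 V) → Prop) : ℝ :=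
  rcCondProb G p q ∅ X

/-- The edge set `S` spans a forest (the spanning subgraph `(V, S)` is acyclic). -/
def IsForest {V : Type*} (S : Finset (Sym2 V)) : Prop :=
  (SimpleGraph.fromEdgeSet (↑S : Set (Sym2 V))).IsAcyclic

/-- The arboreal-gas probability of the event `X`, conditioned on all edges of `R`
being present: each spanning forest `F` has probability proportional to `λ^|F|`. -/
def agCondProb {V : Type*} [Fintype V] (G : SimpleGraph V) (lam : ℝ)
    (R : Finset (Sym2 V)) (X : Finset (Sym2 V) → Prop) : ℝ :=
  (∑ S ∈ G.edgeFinset.powerset, if IsForest S ∧ R ⊆ S ∧ X S then lam ^ S.card else 0) /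
    (∑ S ∈ G.edgeFinset.powerset, if IsForest S ∧ R ⊆ S then lam ^ S.card else 0)

/-- The arboreal-gas probability of the event `X`. -/
def agProb {V : Type*} [Fintype V] (G : SimpleGraph V) (lam : ℝ)
    (X : Finset (Sym2 V) → Prop) : ℝ :=
  agCondProb G lam ∅ X

/-- The bunkbed graph of `G`: two copies of `G` joined by all vertical edges. -/
def bunkbed {V : Type*} (G : SimpleGraph V) : SimpleGraph (V × Fin 2) where
  Adj x y := (x.1 = y.1 ∧ x.2 ≠ y.2) ∨ (G.Adj x.1 y.1 ∧ x.2 = y.2)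
  symm := by
    constructor
    rintro ⟨a, i⟩ ⟨b, j⟩ (⟨h1, h2⟩ | ⟨h1, h2⟩)
    · exact Or.inl ⟨h1.symm, h2.symm⟩
    · exact Or.inr ⟨h1.symm, h2.symm⟩
  loopless := by
    constructor
    rintro ⟨a, i⟩ (⟨_, h⟩ | ⟨h, _⟩)
    · exact h rfl
    · exact G.loopless.irrefl a h

/-- The bunkbed graph of `G` with posts `T`: two copies of `G` joined by the vertical
edges at the vertices of `T`. -/
def bunkbedPosts {V : Type*} (G : SimpleGraph V) (T : Finset V) :
    SimpleGraph (V × Fin 2) where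
  Adj x y := (x.1 = y.1 ∧ x.1 ∈ T ∧ x.2 ≠ y.2) ∨ (G.Adj x.1 y.1 ∧ x.2 = y.2)
  symm := by
    constructor
    rintro ⟨a, i⟩ ⟨b, j⟩ (⟨h1, hT, h2⟩ | ⟨h1, h2⟩)
    · exact Or.inl ⟨h1.symm, h1 ▸ hT, h2.symm⟩
    · exact Or.inr ⟨h1.symm, h2.symm⟩
  loopless := by
    constructor
    rintro ⟨a, i⟩ (⟨_, _, h⟩ | ⟨h, _⟩)
    · exact h rfl
    · exact G.loopless.irrefl a h

/-- The vertical (post) edges of the bunkbed graph with posts `T`. -/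
def postEdges {V : Type*} (T : Finset V) : Finset (Sym2 (V × Fin 2)) :=
  T.image (fun t => s((t, (0 : Fin 2)), (t, (1 : Fin 2))))

/-- `[·]`: the number of spanning trees of `G`. -/
def treeCount {V : Type*} [Fintype V] (G : SimpleGraph V) : ℕ :=
  (G.edgeFinset.powerset.filter fun S => IsForest S ∧ kappa V S = 1).card

/-- `[a | b]`: the number of spanning forests of `G` with exactly two connected
components in which `a` and `b` lie in different components. -/
def sepCount {V : Type*} [Fintype V] (G : SimpleGraph V) (a b : V) : ℕ :=
  (G.edgeFinset.powerset.filter fun S =>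
    IsForest S ∧ kappa V S = 2 ∧ ¬ EConn S a b).card

/-- `[a c | b d]`: the number of spanning forests of `G` with exactly two connected
components in which `a, c` lie in one component and `b, d` lie in the other. -/
def sepCount4 {V : Type*} [Fintype V] (G : SimpleGraph V) (a c b d : V) : ℕ :=
  (G.edgeFinset.powerset.filter fun S =>
    IsForest S ∧ kappa V S = 2 ∧ EConn S a c ∧ EConn S b d ∧ ¬ EConn S a b).card

/-- A finite graph is outerplanar if its vertices can be enumerated so that no two
edges cross. -/
def IsOuterplanar {V : Type*} [Fintype V] (G : SimpleGraph V) : Prop :=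
  ∃ e : Fin (Fintype.card V) ≃ V, ∀ i j k l : Fin (Fintype.card V),
    i < j → j < k → k < l → ¬ (G.Adj (e i) (e k) ∧ G.Adj (e j) (e l))

/-!
For `∑ x = 0` the function `φ_G x (w) = ∑_F ∑_{v ∼_F w} x v`, summed over the two-component
spanning forests `F` of `G`, solves `L_G φ_G x = 2 [·] x`, because a forest together with an edge
joining its two components is a spanning tree with a marked edge. So `y ⬝ φ_G x / 2[·]` is the
effective-resistance form `y ⬝ L_G⁺ x`, and at `x = e_a - e_b`, `y = e_c - e_d` it equals
`([ac|bd] - [ad|bc]) / [·]`. Since `L_H ≤ L_G`, Thomson's principle makes `L_H⁺ - L_G⁺` positive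
semidefinite on sum-zero vectors, and the inequality is Cauchy–Schwarz for this form.
-/

open SimpleGraph

local notation "gr" S => SimpleGraph.fromEdgeSet (SetLike.coe S)

section EdgeSets

variable {V : Type*} {S : Finset (Sym2 V)} {p q u v w : V}

lemma EConn.refl (S : Finset (Sym2 V)) (v : V) : EConn S v v := Reachable.refl v

lemma EConn.symm (h : EConn S u v) : EConn S v u := Reachable.symm h

lemma EConn.trans (h : EConn S u v) (h' : EConn S v w) : EConn S u w := Reachable.trans h h'

lemma econn_comm : EConn S u v ↔ EConn S v u := ⟨EConn.symm, EConn.symm⟩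

lemma EConn.mono {T : Finset (Sym2 V)} (hST : S ⊆ T) (h : EConn S u v) : EConn T u v :=
  Reachable.mono (fromEdgeSet_mono (by exact_mod_cast hST)) h

lemma fromEdgeSet_adj_iff : (gr S).Adj u v ↔ s(u, v) ∈ S ∧ u ≠ v := by
  simp [fromEdgeSet_adj]

lemma econn_of_mem (h : s(u, v) ∈ S) : EConn S u v := by
  by_cases huv : u = v
  · exact huv ▸ EConn.refl S u
  · exact (fromEdgeSet_adj_iff.mpr ⟨h, huv⟩).reachable

lemma fromEdgeSet_erase (e : Sym2 V) : (gr S.erase e) = (gr S).deleteEdges {e} := by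
  ext u v
  simp only [fromEdgeSet_adj, deleteEdges_adj, Finset.coe_erase, Set.mem_sdiff, Finset.mem_coe,
    Set.mem_singleton_iff]
  tauto

lemma fromEdgeSet_insert : (gr insert s(p, q) S) = (gr S) ⊔ edge p q := by
  ext u v
  simp only [fromEdgeSet_adj, sup_adj, edge_adj, Finset.coe_insert, Set.mem_insert_iff,
    Finset.mem_coe, Sym2.eq_iff]
  tauto

lemma kappa_eq_one_iff : kappa V S = 1 ↔ (gr S).Connected := by
  rw [kappa, Nat.card_eq_one_iff_unique, connected_iff]
  constructor
  · rintro ⟨hsub, ⟨c⟩⟩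
    obtain ⟨v, -⟩ := c.exists_rep
    exact ⟨fun u v => ConnectedComponent.eq.mp (Subsingleton.elim _ _), ⟨v⟩⟩
  · rintro ⟨hpre, ⟨v⟩⟩
    exact ⟨hpre.subsingleton_connectedComponent, ⟨(gr S).connectedComponentMk v⟩⟩

lemma kappa_eq_two_of (hpq : ¬ EConn S p q) (hcover : ∀ v, EConn S v p ∨ EConn S v q) :
    kappa V S = 2 := by
  rw [kappa, Nat.card_eq_two_iff]
  refine ⟨(gr S).connectedComponentMk p, (gr S).connectedComponentMk q,
    fun h => hpq (ConnectedComponent.eq.mp h), Set.eq_univ_of_forall fun c => ?_⟩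
  induction c using ConnectedComponent.ind with
  | h v => exact (hcover v).imp ConnectedComponent.sound ConnectedComponent.sound

lemma EConn.or_of_kappa_eq_two (h2 : kappa V S = 2) (hpq : ¬ EConn S p q) (v : V) :
    EConn S v p ∨ EConn S v q := by
  rw [kappa, Nat.card_eq_two_iff' ((gr S).connectedComponentMk p)] at h2
  obtain ⟨c, -, hc⟩ := h2
  refine or_iff_not_imp_left.mpr fun hvp => ConnectedComponent.eq.mp ?_
  rw [hc _ fun h => hvp (ConnectedComponent.eq.mp h),
    hc _ fun h => hpq (ConnectedComponent.eq.mp h.symm)]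

lemma IsForest.subset {T : Finset (Sym2 V)} (hT : IsForest T) (hST : S ⊆ T) : IsForest S :=
  IsAcyclic.anti (fromEdgeSet_mono (by exact_mod_cast hST)) hT

lemma IsForest.insert (hS : IsForest S) (hpq : ¬ EConn S p q) : IsForest (insert s(p, q) S) := by
  rw [IsForest, fromEdgeSet_insert]
  exact hS.sup_edge_of_not_reachable hpq

lemma IsForest.not_econn_erase (hS : IsForest S) (hpq : s(p, q) ∈ S) (hne : p ≠ q) :
    ¬ EConn (S.erase s(p, q)) p q := by
  rw [EConn, fromEdgeSet_erase, ← isBridge_iff]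
  exact isAcyclic_iff_forall_adj_isBridge.mp hS (fromEdgeSet_adj_iff.mpr ⟨hpq, hne⟩)

lemma IsForest.not_econn_erase_iff (hS : IsForest S) {path : (gr S).Walk w v} (hpath : path.IsPath)
    (hwv : w ≠ v) (hadj : (gr S).Adj w u) :
    ¬ EConn (S.erase s(w, u)) w v ↔ u = path.snd := by
  rw [EConn, fromEdgeSet_erase, reachable_deleteEdges_iff_exists_walk, not_exists_not]
  refine ⟨fun h => hS.eq_snd_of_adj_start hpath hadj (path.snd_mem_support_of_mem_edges (h path)),
    ?_⟩
  rintro rfl walk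
  have hbypass : walk.bypass = path :=
    congrArg Subtype.val ((hS.subsingleton_path w v).elim ⟨_, walk.bypass_isPath⟩ ⟨path, hpath⟩)
  exact walk.edges_bypass_subset_edges
    (hbypass ▸ path.mk_start_snd_mem_edges (path.not_nil_of_ne hwv))

lemma EConn.erase_or (h : EConn S v u) (e : Sym2 V) :
    EConn (S.erase e) v u ∨ ∃ x ∈ e, EConn (S.erase e) v x := by
  obtain ⟨walk⟩ := h
  induction walk with
  | nil => exact Or.inl (EConn.refl _ _)
  | @cons v v' u hadj _ ih =>
    by_cases he : s(v, v') = e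
    · exact Or.inr ⟨v, he ▸ Sym2.mem_mk_left v v', EConn.refl _ _⟩
    · have hvv' : EConn (S.erase e) v v' :=
        econn_of_mem (Finset.mem_erase.mpr ⟨he, (fromEdgeSet_adj_iff.mp hadj).1⟩)
      exact ih.imp hvv'.trans fun ⟨x, hx, h⟩ => ⟨x, hx, hvv'.trans h⟩

lemma kappa_insert_eq_one (h2 : kappa V S = 2) (hpq : ¬ EConn S p q) :
    kappa V (insert s(p, q) S) = 1 := by
  have hsub := S.subset_insert s(p, q)
  have hqp : EConn (insert s(p, q) S) q p := (econn_of_mem (S.mem_insert_self _)).symm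
  rw [kappa_eq_one_iff, connected_iff_exists_forall_reachable]
  refine ⟨p, fun v => EConn.symm ?_⟩
  rcases EConn.or_of_kappa_eq_two h2 hpq v with h | h
  exacts [h.mono hsub, (h.mono hsub).trans hqp]

lemma kappa_erase_eq_two (hS : IsForest S) (h1 : kappa V S = 1) (hpq : s(p, q) ∈ S)
    (hne : p ≠ q) : kappa V (S.erase s(p, q)) = 2 := by
  refine kappa_eq_two_of (hS.not_econn_erase hpq hne) fun v => ?_
  rcases EConn.erase_or ((kappa_eq_one_iff.mp h1).preconnected v p) s(p, q) with h | ⟨x, hx, h⟩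
  · exact Or.inl h
  · rcases Sym2.mem_iff.mp hx with rfl | rfl
    exacts [Or.inl h, Or.inr h]

end EdgeSets

section SpanningForests

variable {V : Type*} [Fintype V]

def spanningTrees (G : SimpleGraph V) : Finset (Finset (Sym2 V)) :=
  G.edgeFinset.powerset.filter fun S => IsForest S ∧ kappa V S = 1

def twoForests (G : SimpleGraph V) : Finset (Finset (Sym2 V)) :=
  G.edgeFinset.powerset.filter fun S => IsForest S ∧ kappa V S = 2

lemma card_spanningTrees (G : SimpleGraph V) : (spanningTrees G).card = treeCount G := rfl

lemma treeCount_pos {G : SimpleGraph V} (hG : G.Connected) : 0 < treeCount G := by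
  obtain ⟨T, hTG, hT⟩ := hG.exists_isTree_le
  have hT' : (gr T.edgeFinset) = T := by rw [coe_edgeFinset, fromEdgeSet_edgeSet]
  refine Finset.card_pos.mpr ⟨T.edgeFinset, Finset.mem_filter.mpr
    ⟨Finset.mem_powerset.mpr (edgeFinset_mono hTG), ?_, kappa_eq_one_iff.mpr ?_⟩⟩
  · rw [IsForest, hT']
    exact hT.isAcyclic
  · rw [hT']
    exact hT.connected

variable {G : SimpleGraph V} {p q : V}

/-- Inserting `pq` maps the two-component forests separating `p` from `q` bijectively onto the
spanning trees through `pq`. -/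
lemma sum_twoForests_not_econn {β : Type*} [AddCommMonoid β] (hpq : G.Adj p q)
    (f : Finset (Sym2 V) → β) :
    ∑ F ∈ (twoForests G).filter (¬ EConn · p q), f F =
      ∑ T ∈ (spanningTrees G).filter (s(p, q) ∈ ·), f (T.erase s(p, q)) := by
  have hnotmem {F : Finset (Sym2 V)} (hF : ¬ EConn F p q) : s(p, q) ∉ F :=
    fun h => hF (econn_of_mem h)
  refine Finset.sum_nbij' (insert s(p, q)) (Finset.erase · s(p, q)) ?_ ?_ ?_ ?_ ?_
  · simp only [twoForests, spanningTrees, Finset.mem_filter, Finset.mem_powerset]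
    rintro F ⟨⟨hFG, hF, hF2⟩, hpqF⟩
    exact ⟨⟨Finset.insert_subset (G.mem_edgeFinset.mpr hpq) hFG, hF.insert hpqF,
      kappa_insert_eq_one hF2 hpqF⟩, F.mem_insert_self _⟩
  · simp only [twoForests, spanningTrees, Finset.mem_filter, Finset.mem_powerset]
    rintro T ⟨⟨hTG, hT, hT1⟩, hpqT⟩
    exact ⟨⟨(T.erase_subset _).trans hTG, hT.subset (T.erase_subset _),
      kappa_erase_eq_two hT hT1 hpqT hpq.ne⟩, hT.not_econn_erase hpqT hpq.ne⟩
  · intro F hF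
    exact Finset.erase_insert (hnotmem (Finset.mem_filter.mp hF).2)
  · intro T hT
    exact Finset.insert_erase (Finset.mem_filter.mp hT).2
  · intro F hF
    rw [Finset.erase_insert (hnotmem (Finset.mem_filter.mp hF).2)]

end SpanningForests

section ComponentSums

variable {V : Type*} [Fintype V] {S : Finset (Sym2 V)} {p q u v w : V}

def compSum (S : Finset (Sym2 V)) (x : V → ℝ) (w : V) : ℝ :=
  ∑ v ∈ Finset.univ.filter (EConn S w), x v

lemma compSum_eq_of_econn (h : EConn S u w) (x : V → ℝ) : compSum S x u = compSum S x w := by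
  unfold compSum
  congr 1
  ext v
  simpa using ⟨h.symm.trans, h.trans⟩

lemma compSum_add_compSum_eq_zero (h2 : kappa V S = 2) (hpq : ¬ EConn S p q) {x : V → ℝ}
    (hx : ∑ v, x v = 0) : compSum S x p + compSum S x q = 0 := by
  have hq : Finset.univ.filter (EConn S q) = Finset.univ.filter (¬ EConn S p ·) := by
    ext v
    simp only [Finset.mem_filter, Finset.mem_univ, true_and]
    refine ⟨fun hqv hpv => hpq (hpv.trans hqv.symm), fun hpv => ?_⟩
    exact ((EConn.or_of_kappa_eq_two h2 hpq v).resolve_left fun h => hpv h.symm).symm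
  rw [compSum, compSum, hq, Finset.sum_filter_add_sum_filter_not, hx]

/-- For `v ≠ w` exactly one edge `wu` of the tree separates `w` from `v`, the first edge of the
path from `w` to `v`; so the components of `w` after cutting at the edges around `w` contain `w`
once more than every other vertex. -/
lemma sum_compSum_erase (hS : IsForest S) (h1 : kappa V S = 1) {x : V → ℝ}
    (hx : ∑ v, x v = 0) (w : V) :
    ∑ u ∈ Finset.univ.filter ((gr S).Adj w), compSum (S.erase s(w, u)) x w = x w := by
  set N := Finset.univ.filter ((gr S).Adj w)
  have hcard (v : V) : ((N.filter fun u => EConn (S.erase s(w, u)) w v).card : ℝ) =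
      (N.card - 1 : ℝ) + if v = w then 1 else 0 := by
    split_ifs with hvw
    · subst hvw
      rw [Finset.filter_true_of_mem fun u _ => EConn.refl _ _]
      ring
    · obtain ⟨path, hpath⟩ := ((kappa_eq_one_iff.mp h1).preconnected w v).exists_isPath
      have hsnd : path.snd ∈ N := by
        simpa [N] using path.adj_snd (path.not_nil_of_ne (Ne.symm hvw))
      have hfilter : N.filter (fun u => EConn (S.erase s(w, u)) w v) = N.erase path.snd := by
        ext u
        simp only [N, Finset.mem_filter, Finset.mem_erase, Finset.mem_univ, true_and]
        constructor
        · rintro ⟨hadj, h⟩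
          exact ⟨fun hu => (hS.not_econn_erase_iff hpath (Ne.symm hvw) hadj).mpr hu h, hadj⟩
        · rintro ⟨hu, hadj⟩
          exact ⟨hadj, not_not.mp fun h =>
            hu ((hS.not_econn_erase_iff hpath (Ne.symm hvw) hadj).mp h)⟩
      rw [hfilter, ← Finset.card_erase_add_one hsnd]
      push_cast
      ring
  calc ∑ u ∈ N, compSum (S.erase s(w, u)) x w
      = ∑ v, ((N.filter fun u => EConn (S.erase s(w, u)) w v).card : ℝ) * x v := by
        simp only [compSum, Finset.sum_filter]
        rw [Finset.sum_comm]
        refine Finset.sum_congr rfl fun v _ => ?_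
        rw [← Finset.sum_filter, Finset.sum_const, nsmul_eq_mul]
    _ = (N.card - 1 : ℝ) * ∑ v, x v + x w := by
        simp only [hcard, add_mul, Finset.sum_add_distrib, Finset.mul_sum, ite_mul, one_mul,
          zero_mul, Finset.sum_ite_eq', Finset.mem_univ, if_true]
    _ = x w := by rw [hx, mul_zero, zero_add]

end ComponentSums

section ForestPotential

variable {V : Type*} [Fintype V]

def forestPot (G : SimpleGraph V) (x : V → ℝ) (w : V) : ℝ :=
  ∑ F ∈ twoForests G, compSum F x w

theorem lapMatrix_mulVec_forestPot (G : SimpleGraph V) {x : V → ℝ} (hx : ∑ v, x v = 0) :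
    G.lapMatrix ℝ *ᵥ forestPot G x = (2 * treeCount G : ℝ) • x := by
  ext w
  have hcross (u : V) (F : Finset (Sym2 V)) (hF : F ∈ twoForests G) :
      compSum F x w - compSum F x u = if EConn F w u then 0 else 2 * compSum F x w := by
    split_ifs with hwu
    · rw [compSum_eq_of_econn hwu, sub_self]
    · have := compSum_add_compSum_eq_zero (Finset.mem_filter.mp hF).2.2 hwu hx
      linear_combination -this
  calc (G.lapMatrix ℝ *ᵥ forestPot G x) w
      = ∑ u ∈ G.neighborFinset w, (forestPot G x w - forestPot G x u) := by
        rw [lapMatrix_mulVec_apply, Finset.sum_sub_distrib, Finset.sum_const, nsmul_eq_mul,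
          card_neighborFinset_eq_degree]
    _ = ∑ u ∈ G.neighborFinset w,
          ∑ F ∈ (twoForests G).filter (¬ EConn · w u), 2 * compSum F x w := by
        refine Finset.sum_congr rfl fun u _ => ?_
        rw [forestPot, forestPot, ← Finset.sum_sub_distrib, Finset.sum_filter]
        exact Finset.sum_congr rfl fun F hF => (hcross u F hF).trans (ite_not _ _ _).symm
    _ = ∑ u ∈ G.neighborFinset w,
          ∑ T ∈ (spanningTrees G).filter (s(w, u) ∈ ·), 2 * compSum (T.erase s(w, u)) x w := by
        refine Finset.sum_congr rfl fun u hu => ?_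
        exact sum_twoForests_not_econn ((G.mem_neighborFinset w u).mp hu) _
    _ = ∑ T ∈ spanningTrees G, ∑ u ∈ Finset.univ.filter ((gr T).Adj w),
          2 * compSum (T.erase s(w, u)) x w := by
        refine Finset.sum_comm' fun u T => ?_
        simp only [Finset.mem_filter, mem_neighborFinset, Finset.mem_univ, true_and,
          fromEdgeSet_adj_iff]
        constructor
        · rintro ⟨hadj, hT, hwu⟩
          exact ⟨⟨hwu, hadj.ne⟩, hT⟩
        · rintro ⟨⟨hwu, -⟩, hT⟩
          exact ⟨G.mem_edgeFinset.mp (Finset.mem_powerset.mp (Finset.mem_filter.mp hT).1 hwu),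
            hT, hwu⟩
    _ = ∑ T ∈ spanningTrees G, 2 * x w := by
        refine Finset.sum_congr rfl fun T hT => ?_
        obtain ⟨-, hT, hT1⟩ := Finset.mem_filter.mp hT
        rw [← Finset.mul_sum, sum_compSum_erase hT hT1 hx]
    _ = ((2 * treeCount G : ℝ) • x) w := by
        rw [Finset.sum_const, nsmul_eq_mul, Pi.smul_apply, smul_eq_mul, card_spanningTrees]
        ring

end ForestPotential

section Evaluation

variable {V : Type*} [Fintype V] {F : Finset (Sym2 V)}

lemma compSum_single_sub_single (F : Finset (Sym2 V)) (a b w : V) :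
    compSum F (Pi.single a 1 - Pi.single b 1) w =
      (if EConn F w a then 1 else 0) - if EConn F w b then 1 else 0 := by
  simp [compSum, Finset.sum_sub_distrib, Finset.sum_pi_single']

lemma compSum_sub_compSum_single_sub_single (h2 : kappa V F = 2) (a b c d : V) :
    compSum F (Pi.single a 1 - Pi.single b 1) c - compSum F (Pi.single a 1 - Pi.single b 1) d =
      2 * ((if EConn F a c ∧ EConn F b d ∧ ¬ EConn F a b then 1 else 0) -
        if EConn F a d ∧ EConn F b c ∧ ¬ EConn F a b then 1 else 0) := by
  simp only [compSum_single_sub_single]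
  by_cases hab : EConn F a b
  · have hv (v : V) : EConn F v b ↔ EConn F v a := ⟨(·.trans hab.symm), (·.trans hab)⟩
    simp [hab, hv]
  · have hv (v : V) : EConn F v b ↔ ¬ EConn F v a :=
      ⟨fun hvb hva => hab (hva.symm.trans hvb),
        (EConn.or_of_kappa_eq_two h2 hab v).resolve_left⟩
    rw [econn_comm (u := a) (v := c), econn_comm (u := b) (v := d), econn_comm (u := a) (v := d),
      econn_comm (u := b) (v := c), hv, hv]
    by_cases EConn F c a <;> by_cases EConn F d a <;> norm_num [*]

lemma card_twoForests_filter (G : SimpleGraph V) (a c b d : V) :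
    ((twoForests G).filter fun F => EConn F a c ∧ EConn F b d ∧ ¬ EConn F a b).card =
      sepCount4 G a c b d := by
  rw [twoForests, Finset.filter_filter, sepCount4]
  simp only [and_assoc]

lemma sepCount_eq_sepCount4 (G : SimpleGraph V) (a b : V) :
    sepCount G a b = sepCount4 G a a b b := by
  simp [sepCount, sepCount4, EConn.refl]

lemma sepCount4_swap_eq_zero (G : SimpleGraph V) (a b : V) : sepCount4 G a b b a = 0 := by
  simpa [sepCount4] using fun _ _ _ _ hab _ => hab

lemma single_sub_single_dotProduct_forestPot (G : SimpleGraph V) (a b c d : V) :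
    (Pi.single c 1 - Pi.single d 1) ⬝ᵥ forestPot G (Pi.single a 1 - Pi.single b 1) =
      2 * ((sepCount4 G a c b d : ℝ) - sepCount4 G a d b c) := by
  rw [sub_dotProduct, single_dotProduct, single_dotProduct, one_mul, one_mul, forestPot, forestPot,
    ← Finset.sum_sub_distrib]
  rw [Finset.sum_congr rfl fun F hF =>
    compSum_sub_compSum_single_sub_single (Finset.mem_filter.mp hF).2.2 a b c d]
  rw [← Finset.mul_sum, Finset.sum_sub_distrib, Finset.sum_boole, Finset.sum_boole,
    card_twoForests_filter, card_twoForests_filter]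

end Evaluation

section QuadraticForms

variable {n : Type*} [Fintype n] {A B : Matrix n n ℝ}

lemma dotProduct_mulVec_comm (hA : A.IsSymm) (x y : n → ℝ) : x ⬝ᵥ (A *ᵥ y) = y ⬝ᵥ (A *ᵥ x) := by
  rw [dotProduct_mulVec, ← mulVec_transpose, hA.eq, dotProduct_comm]

/-- Thomson's principle. -/
lemma dotProduct_le_of_quadForm_le (hA : A.PosSemidef) (hAB : ∀ y, y ⬝ᵥ (A *ᵥ y) ≤ y ⬝ᵥ (B *ᵥ y))
    {x r s : n → ℝ} (hr : B *ᵥ r = x) (hs : A *ᵥ s = x) : x ⬝ᵥ r ≤ x ⬝ᵥ s := by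
  have hsymm : A.IsSymm := by simpa using hA.isHermitian
  have h0 : 0 ≤ (r - s) ⬝ᵥ (A *ᵥ (r - s)) := by simpa using hA.dotProduct_mulVec_nonneg (r - s)
  have hrs : s ⬝ᵥ (A *ᵥ r) = r ⬝ᵥ x := by rw [dotProduct_mulVec_comm hsymm, hs]
  have hr' := hAB r
  rw [hr] at hr'
  rw [mulVec_sub, dotProduct_sub, sub_dotProduct, sub_dotProduct, hrs, hs] at h0
  rw [dotProduct_comm x r, dotProduct_comm x s]
  linarith

variable {W : Submodule ℝ (n → ℝ)} {PA PB : (n → ℝ) → n → ℝ}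

lemma dotProduct_comm_of_mulVec_eq (hA : A.IsSymm) (hPA : ∀ x ∈ W, A *ᵥ PA x = x) {x y : n → ℝ}
    (hx : x ∈ W) (hy : y ∈ W) : x ⬝ᵥ PA y = y ⬝ᵥ PA x := by
  conv_lhs => rw [← hPA x hx]
  rw [dotProduct_comm, dotProduct_mulVec_comm hA, hPA y hy, dotProduct_comm]

/-- If `PA` and `PB` invert `A ≤ B` on `W`, the form `(x, y) ↦ x ⬝ (PA y - PB y)` is symmetric,
bilinear and positive semidefinite on `W`, so it satisfies the Cauchy–Schwarz inequality. -/
theorem sq_dotProduct_sub_le (hA : A.PosSemidef) (hB : B.IsSymm)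
    (hAB : ∀ y, y ⬝ᵥ (A *ᵥ y) ≤ y ⬝ᵥ (B *ᵥ y)) (hPA : ∀ x ∈ W, A *ᵥ PA x = x)
    (hPB : ∀ x ∈ W, B *ᵥ PB x = x) {u w : n → ℝ} (hu : u ∈ W) (hw : w ∈ W) :
    (w ⬝ᵥ (PA u - PB u)) ^ 2 ≤ (u ⬝ᵥ (PA u - PB u)) * (w ⬝ᵥ (PA w - PB w)) := by
  have hAsymm : A.IsSymm := by simpa using hA.isHermitian
  set D : (n → ℝ) → (n → ℝ) → ℝ := fun x y => x ⬝ᵥ (PA y - PB y) with hD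
  have hD_comm {x y : n → ℝ} (hx : x ∈ W) (hy : y ∈ W) : D x y = D y x := by
    simp only [hD, dotProduct_sub, dotProduct_comm_of_mulVec_eq hAsymm hPA hx hy,
      dotProduct_comm_of_mulVec_eq hB hPB hx hy]
  have hD_nonneg {x : n → ℝ} (hx : x ∈ W) : 0 ≤ D x x := by
    simpa [hD, dotProduct_sub] using dotProduct_le_of_quadForm_le hA hAB (hPB x hx) (hPA x hx)
  have hquad (t : ℝ) : 0 ≤ D w w * (t * t) + 2 * D w u * t + D u u := by
    have hv : u + t • w ∈ W := W.add_mem hu (W.smul_mem t hw)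
    have hlin (z : n → ℝ) : D (u + t • w) z = D u z + t * D w z := by
      simp only [hD, add_dotProduct, smul_dotProduct, smul_eq_mul]
    have := hD_nonneg hv
    rw [hlin, hD_comm hu hv, hD_comm hw hv, hlin, hlin, hD_comm hu hw] at this
    linarith
  have := discrim_le_zero hquad
  rw [discrim] at this
  nlinarith

end QuadraticForms

section Voltage

variable {V : Type*} [Fintype V]

lemma dotProduct_lapMatrix_mulVec_mono {G H : SimpleGraph V} (hHG : H ≤ G) (x : V → ℝ) :
    x ⬝ᵥ (H.lapMatrix ℝ *ᵥ x) ≤ x ⬝ᵥ (G.lapMatrix ℝ *ᵥ x) := by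
  simp only [← toLinearMap₂'_apply', lapMatrix_toLinearMap₂']
  gcongr with i _ j _
  split_ifs with hH hG
  exacts [le_rfl, absurd (hHG hH) hG, sq_nonneg _, le_rfl]

def voltage (G : SimpleGraph V) (x : V → ℝ) : V → ℝ :=
  (2 * treeCount G : ℝ)⁻¹ • forestPot G x

lemma lapMatrix_mulVec_voltage {G : SimpleGraph V} (hG : G.Connected) {x : V → ℝ}
    (hx : ∑ v, x v = 0) : G.lapMatrix ℝ *ᵥ voltage G x = x := by
  have : (2 * treeCount G : ℝ) ≠ 0 := by positivity [treeCount_pos hG]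
  rw [voltage, mulVec_smul, lapMatrix_mulVec_forestPot G hx, smul_smul, inv_mul_cancel₀ this,
    one_smul]

lemma single_sub_single_dotProduct_voltage (G : SimpleGraph V) (a b c d : V) :
    (Pi.single c 1 - Pi.single d 1) ⬝ᵥ voltage G (Pi.single a 1 - Pi.single b 1) =
      ((sepCount4 G a c b d : ℝ) - sepCount4 G a d b c) / treeCount G := by
  rw [voltage, dotProduct_smul, smul_eq_mul, single_sub_single_dotProduct_forestPot]
  ring

end Voltage

/-- the strengthened Rayleigh inequality for a connected spanning
subgraph `H` of `G`. -/
theorem strong_rayleigh {V : Type*} [Fintype V] (G H : SimpleGraph V)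
    (hG : G.Connected) (hHG : H ≤ G) (hH : H.Connected) (a b c d : V) :
    ((sepCount H a b : ℝ) / (treeCount H : ℝ) -
        (sepCount G a b : ℝ) / (treeCount G : ℝ)) *
      ((sepCount H c d : ℝ) / (treeCount H : ℝ) -
        (sepCount G c d : ℝ) / (treeCount G : ℝ)) ≥
    (((sepCount4 H a d b c : ℝ) - (sepCount4 H a c b d : ℝ)) / (treeCount H : ℝ) -
      ((sepCount4 G a d b c : ℝ) - (sepCount4 G a c b d : ℝ)) / (treeCount G : ℝ)) ^ 2 := by
  let W := LinearMap.ker (∑ v, LinearMap.proj v : (V → ℝ) →ₗ[ℝ] ℝ)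
  have hW {x : V → ℝ} : x ∈ W ↔ ∑ v, x v = 0 := by simp [W]
  have hsingle (p q : V) : Pi.single p 1 - Pi.single q 1 ∈ W := by
    simp [hW, Finset.sum_sub_distrib]
  have hCS := sq_dotProduct_sub_le (H.posSemidef_lapMatrix ℝ) (G.isSymm_lapMatrix ℝ)
    (dotProduct_lapMatrix_mulVec_mono hHG) (fun x hx => lapMatrix_mulVec_voltage hH (hW.mp hx))
    (fun x hx => lapMatrix_mulVec_voltage hG (hW.mp hx)) (hsingle a b) (hsingle c d)
  simp only [dotProduct_sub, single_sub_single_dotProduct_voltage, sepCount4_swap_eq_zero,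
    ← sepCount_eq_sepCount4, Nat.cast_zero, sub_zero] at hCS
  rw [ge_iff_le]
  convert hCS using 1
  ring
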